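/- Fix α, β ∈ (0,1), positive reals a, b, μ, and θ ∈ (π/2, π/(1+α)). For every nonzero complex z with |arg z| < θ one has 1 + b·z^β ≠ 0, the value g(z) = (z + a·z^{1+α}) / (μ·(1 + b·z^β)) is nonzero, and |arg g(z)| ≤ (1+α)·|arg z| < (1+α)·θ. In particular g maps the sector Σ_θ into the sector Σ_{(1+α)θ}. -/

import Mathlib

/-!
Write `φ = arg z`. Since `z ^ (1 + α) = z · z ^ α`, we have
`g(z) = z (1 + a z^α) / (μ (1 + b z^β))`.
Adding `1` to a number `u` off the negative real axis moves its argument towards `0` without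
changing its sign, because `1 + u = u (1 + u⁻¹)` and `1 + u⁻¹` lies in the half-plane opposite
to `u`. Hence `arg (1 + a z^α)` lies between `0` and `αφ`, and `arg (1 + b z^β)` between `0`
and `βφ`, so `arg g(z) = φ + arg (1 + a z^α) - arg (1 + b z^β)` is at most `(1 + α)|φ|` in
absolute value; the hypothesis `θ < π / (1 + α)` keeps every argument involved inside `(-π, π)`.
-/

/-- The symbol `g(z) = (z + a z^{1+α}) / (μ (1 + b z^β))` of the fractional
Oldroyd-B problem. Powers are principal complex powers. -/
noncomputable def oldroydSymbol (a b μ α β : ℝ) (z : ℂ) : ℂ :=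
  (z + (a : ℂ) * z ^ ((1 + α : ℝ) : ℂ)) / ((μ : ℂ) * (1 + (b : ℂ) * z ^ ((β : ℝ) : ℂ)))

open Complex Real Set
open scoped Interval

namespace Complex

theorem one_add_ne_zero_of_arg_ne_pi {u : ℂ} (hu : u.arg ≠ π) : 1 + u ≠ 0 := fun h => by
  rw [eq_neg_of_add_eq_zero_right h, arg_neg_one] at hu
  exact hu rfl

theorem arg_one_add_mem_uIcc {u : ℂ} (hu : u.arg ≠ π) : (1 + u).arg ∈ [[0, u.arg]] := by
  by_cases him : u.im = 0
  · have hre : 0 ≤ u.re := by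
      by_contra! hre
      exact hu (arg_eq_pi_iff.mpr ⟨hre, him⟩)
    rw [arg_eq_zero_iff.mpr ⟨hre, him⟩, arg_eq_zero_iff.mpr
      ⟨by rw [add_re, one_re]; linarith, by rw [add_im, one_im, him, add_zero]⟩]
    exact left_mem_uIcc
  have hu₀ : u ≠ 0 := fun h => him (by simp [h])
  have hnormSq : 0 < normSq u := normSq_pos.mpr hu₀
  have hv_im : (1 + u⁻¹).im = -u.im / normSq u := by simp [neg_div]
  have hv : 1 + u⁻¹ ≠ 0 := fun h => by
    rw [h, zero_im, eq_comm, div_eq_zero_iff] at hv_im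
    exact him (neg_eq_zero.mp (hv_im.resolve_right hnormSq.ne'))
  have hsplit (hsum : u.arg + (1 + u⁻¹).arg ∈ Ioc (-π) π) :
      (1 + u).arg = u.arg + (1 + u⁻¹).arg := by
    rw [← arg_mul hu₀ hv hsum, mul_add, mul_inv_cancel₀ hu₀, mul_one, add_comm]
  rcases lt_or_gt_of_ne him with him | him
  · have hv_arg : 0 ≤ (1 + u⁻¹).arg :=
      arg_nonneg_iff.mpr (by rw [hv_im]; exact div_nonneg (by linarith) hnormSq.le)
    have h1 : (1 + u).arg < 0 := arg_neg_iff.mpr (by simpa using him)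
    have hu_arg : u.arg < 0 := arg_neg_iff.mpr him
    rw [hsplit ⟨by linarith [neg_pi_lt_arg u], by linarith [arg_le_pi (1 + u⁻¹)]⟩] at h1 ⊢
    exact mem_uIcc_of_ge (by linarith) h1.le
  · have hv_arg : (1 + u⁻¹).arg < 0 :=
      arg_neg_iff.mpr (by rw [hv_im]; exact div_neg_of_neg_of_pos (by linarith) hnormSq)
    have h1 : 0 ≤ (1 + u).arg := arg_nonneg_iff.mpr (by simpa using him.le)
    have hu_arg : 0 ≤ u.arg := arg_nonneg_iff.mpr him.le
    rw [hsplit ⟨by linarith [neg_pi_lt_arg (1 + u⁻¹)], by linarith [arg_le_pi u]⟩] at h1 ⊢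
    exact mem_uIcc_of_le h1 (by linarith)

theorem arg_ofReal_mul_cpow_ofReal {z : ℂ} (hz : z ≠ 0) {c s : ℝ} (hc : 0 < c)
    (hs : |z.arg * s| < π) : (c * z ^ (s : ℂ)).arg = z.arg * s := by
  rw [arg_real_mul _ hc, cpow_ofReal, ofReal_cos, ofReal_sin]
  exact arg_mul_cos_add_sin_mul_I (by positivity) ⟨(abs_lt.mp hs).1, (abs_lt.mp hs).2.le⟩

theorem one_add_ofReal_mul_cpow_ofReal_ne_zero {z : ℂ} (hz : z ≠ 0) {c s : ℝ} (hc : 0 < c)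
    (hs : |z.arg * s| < π) : 1 + c * z ^ (s : ℂ) ≠ 0 :=
  one_add_ne_zero_of_arg_ne_pi <| by
    rw [arg_ofReal_mul_cpow_ofReal hz hc hs]; exact (abs_lt.mp hs).2.ne

theorem arg_one_add_ofReal_mul_cpow_ofReal_mem_uIcc {z : ℂ} (hz : z ≠ 0) {c s : ℝ} (hc : 0 < c)
    (hs : |z.arg * s| < π) : (1 + c * z ^ (s : ℂ)).arg ∈ [[0, z.arg * s]] := by
  rw [← arg_ofReal_mul_cpow_ofReal hz hc hs]
  exact arg_one_add_mem_uIcc <| by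
    rw [arg_ofReal_mul_cpow_ofReal hz hc hs]; exact (abs_lt.mp hs).2.ne

theorem arg_mul_div_ofReal_mul {x y w : ℂ} (hx : x ≠ 0) (hy : y ≠ 0) (hw : w ≠ 0) {r : ℝ}
    (hr : 0 < r) (h : x.arg + y.arg - w.arg ∈ Ioc (-π) π) :
    (x * y / (r * w)).arg = x.arg + y.arg - w.arg := by
  have hrw : (r : ℂ) * w ≠ 0 := mul_ne_zero (ofReal_ne_zero.mpr hr.ne') hw
  rw [← Angle.toReal_coe_eq_self_iff_mem_Ioc.mpr h, ← arg_coe_angle_eq_iff_eq_toReal,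
    arg_div_coe_angle (mul_ne_zero hx hy) hrw, arg_mul_coe_angle hx hy, arg_real_mul w hr]
  rfl

end Complex

theorem abs_add_sub_le_of_mem_uIcc {φ A B α β : ℝ} (hα : 0 ≤ α) (hβ₀ : 0 ≤ β) (hβ₁ : β ≤ 1)
    (hA : A ∈ [[0, φ * α]]) (hB : B ∈ [[0, φ * β]]) : |φ + A - B| ≤ (1 + α) * |φ| := by
  rw [abs_le]
  rcases le_total 0 φ with hφ | hφ
  · rw [uIcc_of_le (by positivity)] at hA hB
    rw [abs_of_nonneg hφ]
    constructor <;> nlinarith [hA.1, hA.2, hB.1, hB.2]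
  · rw [uIcc_of_ge (mul_nonpos_of_nonpos_of_nonneg hφ hα)] at hA
    rw [uIcc_of_ge (mul_nonpos_of_nonpos_of_nonneg hφ hβ₀)] at hB
    rw [abs_of_nonpos hφ]
    constructor <;> nlinarith [hA.1, hA.2, hB.1, hB.2]

theorem oldroydSymbol_eq_mul_div (a b μ α β : ℝ) {z : ℂ} (hz : z ≠ 0) :
    oldroydSymbol a b μ α β z = z * (1 + a * z ^ (α : ℂ)) / (μ * (1 + b * z ^ (β : ℂ))) := by
  rw [oldroydSymbol, ofReal_add, ofReal_one, cpow_add _ _ hz, cpow_one]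
  ring

theorem oldroydSymbol_sector_map (α β a b μ θ : ℝ)
    (hα : α ∈ Set.Ioo (0 : ℝ) 1) (hβ : β ∈ Set.Ioo (0 : ℝ) 1)
    (ha : 0 < a) (hb : 0 < b) (hμ : 0 < μ)
    (hθ' : θ < Real.pi / (1 + α))
    (z : ℂ) (hz : z ≠ 0) (hargz : |Complex.arg z| < θ) :
    1 + (b : ℂ) * z ^ ((β : ℝ) : ℂ) ≠ 0 ∧
    oldroydSymbol a b μ α β z ≠ 0 ∧
    |Complex.arg (oldroydSymbol a b μ α β z)| ≤ (1 + α) * |Complex.arg z| ∧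
    (1 + α) * |Complex.arg z| < (1 + α) * θ := by
  obtain ⟨hα₀, -⟩ := hα
  obtain ⟨hβ₀, hβ₁⟩ := hβ
  have hθ : (1 + α) * |z.arg| < (1 + α) * θ := mul_lt_mul_of_pos_left hargz (by linarith)
  have hφ : (1 + α) * |z.arg| < π := hθ.trans (by rwa [lt_div_iff₀' (by linarith)] at hθ')
  have hαφ : |z.arg * α| < π := by
    rw [abs_mul, abs_of_pos hα₀]; nlinarith [abs_nonneg z.arg]
  have hβφ : |z.arg * β| < π := by
    rw [abs_mul, abs_of_pos hβ₀]; nlinarith [abs_nonneg z.arg]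
  have hN := one_add_ofReal_mul_cpow_ofReal_ne_zero hz ha hαφ
  have hD := one_add_ofReal_mul_cpow_ofReal_ne_zero hz hb hβφ
  have hbound := abs_add_sub_le_of_mem_uIcc hα₀.le hβ₀.le hβ₁.le
    (arg_one_add_ofReal_mul_cpow_ofReal_mem_uIcc hz ha hαφ)
    (arg_one_add_ofReal_mul_cpow_ofReal_mem_uIcc hz hb hβφ)
  have hrange := abs_lt.mp (hbound.trans_lt hφ)
  rw [oldroydSymbol_eq_mul_div a b μ α β hz,
    arg_mul_div_ofReal_mul hz hN hD hμ ⟨hrange.1, hrange.2.le⟩]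
  refine ⟨hD, ?_, hbound, hθ⟩
  exact div_ne_zero (mul_ne_zero hz hN) (mul_ne_zero (ofReal_ne_zero.mpr hμ.ne') hD)
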